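/- arXiv:1912.03957 — 8 statements merged into one kernel-verified Lean document; each statement's English description precedes it below -/
import Mathlib

section
/- Let A be a symmetric real matrix of order n decomposed as A = M_1 + ... + M_m, where each M_j is supported on an index set V_j (i.e. all entries of M_j outside V_j × V_j are zero). For each index u, let λ(D_u) be the sum of λ(M_j) over all j such that u ∈ V_j, where λ(M_j) denotes the smallest eigenvalue of the principal submatrix of M_j on V_j. Then the smallest eigenvalue of A is at least min_u λ(D_u). -/
/-- The smallest eigenvalue of a real symmetric matrix. -/
noncomputable def minEig {n : Type*} [Fintype n] [DecidableEq n] (hn : Nonempty n)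
    {A : Matrix n n ℝ} (hA : A.IsHermitian) : ℝ :=
  Finset.univ.inf' (Finset.univ_nonempty_iff.mpr hn) hA.eigenvalues

/-!
The smallest eigenvalue of a symmetric matrix `B` is the largest `r` with
`r ‖x‖² ≤ xᵀ B x` for all `x`. Because `M j` is supported on `V j × V j`, its quadratic form
only sees the coordinates in `V j`, so `xᵀ M_j x ≥ λ(M_j) ∑_{u ∈ V j} x_u²`. Summing over `j`
and exchanging the order of summation gives `xᵀ A x ≥ ∑_u λ(D_u) x_u² ≥ (min_u λ(D_u)) ‖x‖²`.
-/

open Matrix Finset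

section
variable {p : Type*} [Fintype p] [DecidableEq p] (hp : Nonempty p) {B : Matrix p p ℝ}
  (hB : B.IsHermitian)

lemma minEig_le_eigenvalues (i : p) : minEig hp hB ≤ hB.eigenvalues i :=
  inf'_le _ (mem_univ i)

lemma le_minEig_iff {r : ℝ} : r ≤ minEig hp hB ↔ ∀ i, r ≤ hB.eigenvalues i := by
  simp [minEig, le_inf'_iff]

lemma posSemidef_sub_minEig_smul_one : (B - minEig hp hB • (1 : Matrix p p ℝ)).PosSemidef := by
  have hH : (B - minEig hp hB • (1 : Matrix p p ℝ)).IsHermitian :=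
    hB.sub (isHermitian_one.smul (IsSelfAdjoint.all _))
  refine hH.posSemidef_iff_eigenvalues_nonneg.mpr fun i => ?_
  -- the spectrum of `B - c` is the spectrum of `B` shifted by `-c`
  have hi : hH.eigenvalues i ∈ spectrum ℝ (B - algebraMap ℝ _ (minEig hp hB)) := by
    rw [Algebra.algebraMap_eq_smul_one]
    exact hH.eigenvalues_mem_spectrum_real i
  rw [← spectrum.sub_singleton_eq, hB.spectrum_real_eq_range_eigenvalues] at hi
  obtain ⟨_, ⟨j, rfl⟩, c, rfl, hj⟩ := hi
  rw [Pi.zero_apply, ← hj]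
  exact sub_nonneg.mpr (minEig_le_eigenvalues hp hB j)

lemma minEig_mul_dotProduct_self_le (x : p → ℝ) :
    minEig hp hB * (x ⬝ᵥ x) ≤ x ⬝ᵥ (B *ᵥ x) := by
  have := (posSemidef_sub_minEig_smul_one hp hB).dotProduct_mulVec_nonneg x
  rw [star_trivial, sub_mulVec, dotProduct_sub, smul_mulVec, one_mulVec, dotProduct_smul,
    smul_eq_mul] at this
  linarith

lemma le_minEig_of_forall_mul_dotProduct_self_le {r : ℝ}
    (h : ∀ x : p → ℝ, r * (x ⬝ᵥ x) ≤ x ⬝ᵥ (B *ᵥ x)) : r ≤ minEig hp hB := by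
  refine (le_minEig_iff hp hB).mpr fun i => ?_
  have hv : ⇑(hB.eigenvectorBasis i) ⬝ᵥ ⇑(hB.eigenvectorBasis i) = 1 := by
    have h := EuclideanSpace.inner_eq_star_dotProduct (hB.eigenvectorBasis i)
      (hB.eigenvectorBasis i)
    rw [star_trivial] at h
    rw [← h, real_inner_self_eq_norm_sq, hB.eigenvectorBasis.orthonormal.1 i, one_pow]
  simpa [hv, hB.mulVec_eigenvectorBasis, dotProduct_smul] using h (hB.eigenvectorBasis i)
end

lemma dotProduct_mulVec_eq_submatrix_of_support {n R : Type*} [Fintype n] [CommSemiring R]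
    {M : Matrix n n R} {V : Finset n}
    (hrow : ∀ u v, u ∉ V → M u v = 0) (hcol : ∀ u v, v ∉ V → M u v = 0) (x : n → R) :
    x ⬝ᵥ (M *ᵥ x) =
      (fun u : V => x u) ⬝ᵥ (M.submatrix Subtype.val Subtype.val *ᵥ fun u : V => x u) := by
  have hinner : ∀ u, ∑ v, M u v * x v = ∑ v : V, M u v * x v := fun u => by
    rw [sum_coe_sort V (fun v => M u v * x v),
      sum_subset (subset_univ V) fun v _ hv => by rw [hcol u v hv, zero_mul]]
  have houter : ∑ u, x u * ∑ v, M u v * x v = ∑ u : V, x u * ∑ v, M u v * x v := by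
    rw [sum_coe_sort V (fun u => x u * ∑ v, M u v * x v),
      sum_subset (subset_univ V) fun u _ hu => by simp [hrow u _ hu]]
  simp only [dotProduct, mulVec, submatrix_apply]
  rw [houter]
  simp_rw [hinner]

lemma minEig_submatrix_mul_le_dotProduct_mulVec {n : Type*} [Fintype n] [DecidableEq n]
    {M : Matrix n n ℝ} (hM : M.IsHermitian) {V : Finset n} (hV : Nonempty V)
    (hrow : ∀ u v, u ∉ V → M u v = 0) (hcol : ∀ u v, v ∉ V → M u v = 0) (x : n → ℝ) :
    minEig hV (hM.submatrix Subtype.val) * ∑ u ∈ V, x u * x u ≤ x ⬝ᵥ (M *ᵥ x) := by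
  rw [dotProduct_mulVec_eq_submatrix_of_support hrow hcol, ← sum_coe_sort V]
  exact minEig_mul_dotProduct_self_le hV _ _

/-- If a real symmetric matrix `A` decomposes as `A = M 1 + ⋯ + M m` with each `M j`
supported on `V j`, then the smallest eigenvalue of `A` is at least the minimum over
vertices `u` of the sum, over those `j` with `u ∈ V j`, of the smallest eigenvalue of
the principal submatrix of `M j` on `V j`. -/
theorem stmt1 {n : Type*} [Fintype n] [DecidableEq n] (hn : Nonempty n) {m : ℕ}
    (A : Matrix n n ℝ) (hA : A.IsHermitian)
    (M : Fin m → Matrix n n ℝ) (hM : ∀ j, (M j).IsHermitian)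
    (V : Fin m → Finset n) (hV : ∀ j, (V j).Nonempty)
    (hrow : ∀ j, ∀ u v, u ∉ V j → M j u v = 0)
    (hcol : ∀ j, ∀ u v, v ∉ V j → M j u v = 0)
    (hsum : A = ∑ j, M j) :
    minEig hn hA ≥
      Finset.univ.inf' (Finset.univ_nonempty_iff.mpr hn) (fun u =>
        ∑ j ∈ Finset.univ.filter (fun j => u ∈ V j),
          minEig (⟨⟨(hV j).choose, (hV j).choose_spec⟩⟩ : Nonempty (V j))
            ((hM j).submatrix (Subtype.val : (V j) → n))) := by
  set c : Fin m → ℝ := fun j =>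
    minEig ⟨⟨(hV j).choose, (hV j).choose_spec⟩⟩ ((hM j).submatrix (Subtype.val : (V j) → n))
  set D : n → ℝ := fun u => ∑ j ∈ univ.filter (fun j => u ∈ V j), c j
  refine le_minEig_of_forall_mul_dotProduct_self_le hn hA fun x => ?_
  have hcount : ∑ u, D u * (x u * x u) = ∑ j, c j * ∑ u ∈ V j, x u * x u := by
    simp only [D, sum_mul, mul_sum]
    exact sum_comm' fun u j => by simp
  calc univ.inf' _ D * (x ⬝ᵥ x) = ∑ u, univ.inf' _ D * (x u * x u) := mul_sum _ _ _
    _ ≤ ∑ u, D u * (x u * x u) := sum_le_sum fun u _ =>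
        mul_le_mul_of_nonneg_right (inf'_le _ (mem_univ u)) (mul_self_nonneg _)
    _ = ∑ j, c j * ∑ u ∈ V j, x u * x u := hcount
    _ ≤ ∑ j, x ⬝ᵥ (M j *ᵥ x) := sum_le_sum fun j _ =>
        minEig_submatrix_mul_le_dotProduct_mulVec (hM j) _ (hrow j) (hcol j) x
    _ = x ⬝ᵥ (A *ᵥ x) := by rw [hsum, sum_mulVec, dotProduct_sum]
end

section
/- Let G be a strongly regular graph with parameters (n, k, a, c) with 0 < c. Then every eigenvalue of the adjacency matrix of G other than k is a root of the quadratic x^2 - (a-c)x - (k-c) = 0. -/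
/-- For a strongly regular graph with parameters `(n, k, a, c)` with `0 < c`, every
adjacency eigenvalue other than `k` is a root of `x² - (a - c) x - (k - c) = 0`. -/
theorem stmt7 {V : Type*} [Fintype V] [DecidableEq V] (G : SimpleGraph V)
    [DecidableRel G.Adj] (n k a c : ℕ) (h : G.IsSRGWith n k a c) (hc : 0 < c)
    (μ : ℝ) (x : V → ℝ) (hx : x ≠ 0)
    (heig : (G.adjMatrix ℝ).mulVec x = μ • x) (hne : μ ≠ (k : ℝ)) :
    μ ^ 2 - ((a : ℝ) - (c : ℝ)) * μ - ((k : ℝ) - (c : ℝ)) = 0 := by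
  have hsum : ∑ v, x v = 0 := by
    have h1 : ∑ v, (G.adjMatrix ℝ).mulVec x v = μ * ∑ v, x v := by
      rw [heig]; simp [Finset.mul_sum]
    have h2 : ∑ v, (G.adjMatrix ℝ).mulVec x v = (k : ℝ) * ∑ v, x v := by
      have e1 : ∑ v, (G.adjMatrix ℝ).mulVec x v
          = dotProduct (fun _ => (1:ℝ)) ((G.adjMatrix ℝ).mulVec x) := by
        simp [dotProduct]
      rw [e1, Matrix.dotProduct_mulVec]
      have e2 : Matrix.vecMul (fun _ => (1:ℝ)) (G.adjMatrix ℝ) = fun _ => (k : ℝ) := by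
        funext u
        rw [SimpleGraph.adjMatrix_vecMul_apply]
        simp [h.regular u]
      rw [e2]
      simp [dotProduct, Finset.mul_sum]
    have h3 := h1.symm.trans h2
    rcases mul_eq_mul_right_iff.mp h3 with h' | h'
    · exact absurd h' hne
    · exact h'
  obtain ⟨v, hv⟩ : ∃ v, x v ≠ 0 := by
    by_contra hcon
    push_neg at hcon
    exact hx (funext hcon)
  have hnotmem : v ∉ G.neighborFinset v ∪ Gᶜ.neighborFinset v := by
    simp [SimpleGraph.mem_neighborFinset]
  have hdisj : Disjoint (G.neighborFinset v) (Gᶜ.neighborFinset v) := by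
    rw [Finset.disjoint_left]
    intro u hu hu'
    rw [SimpleGraph.mem_neighborFinset] at hu
    rw [SimpleGraph.mem_neighborFinset, SimpleGraph.compl_adj] at hu'
    exact hu'.2 hu
  have huniv : (Finset.univ : Finset V)
      = insert v (G.neighborFinset v ∪ Gᶜ.neighborFinset v) := by
    ext u
    simp only [Finset.mem_univ, Finset.mem_insert, Finset.mem_union,
      SimpleGraph.mem_neighborFinset, SimpleGraph.compl_adj, true_iff]
    by_cases hu : u = v
    · left; exact hu
    · right
      by_cases hadj : G.Adj v u
      · exact Or.inl hadj
      · exact Or.inr ⟨fun hh => hu hh.symm, hadj⟩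
  have hcompl : (Gᶜ.adjMatrix ℝ).mulVec x v = -x v - μ * x v := by
    rw [SimpleGraph.adjMatrix_mulVec_apply]
    have hAv : ∑ u ∈ G.neighborFinset v, x u = μ * x v := by
      rw [← SimpleGraph.adjMatrix_mulVec_apply, heig]; simp
    have hsplit : ∑ u, x u = x v + (∑ u ∈ G.neighborFinset v, x u
        + ∑ u ∈ Gᶜ.neighborFinset v, x u) := by
      rw [huniv, Finset.sum_insert hnotmem, Finset.sum_union hdisj]
    rw [hsum, hAv] at hsplit
    linarith
  have hm := congrArg (fun M : Matrix V V ℝ => M.mulVec x v) (h.matrix_eq (α := ℝ))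
  simp only [pow_two, ← Matrix.mulVec_mulVec, heig, Matrix.add_mulVec, Matrix.smul_mulVec,
    Matrix.mulVec_smul, Matrix.one_mulVec, Pi.add_apply, Pi.smul_apply, smul_eq_mul] at hm
  rw [hcompl] at hm
  have hmv : μ * (μ * x v) = k * x v + a * (μ * x v) + c * (-x v - μ * x v) := by
    simpa using hm
  have key : (μ ^ 2 - ((a:ℝ) - c) * μ - ((k:ℝ) - c)) * x v = 0 := by nlinarith [hmv]
  exact (mul_eq_zero.mp key).resolve_right hv
end

section
/- The complete multipartite graph K_{n_1,...,n_m} with part sizes n_1 ≥ n_2 ≥ ... ≥ n_m has smallest adjacency eigenvalue at least -n_1, with equality if and only if n_1 = n_2. -/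
/-- The adjacency matrix of a graph is Hermitian. -/
lemma adjHerm {V : Type*} [Fintype V] (G : SimpleGraph V) [DecidableRel G.Adj] :
    (G.adjMatrix ℝ).IsHermitian := by
  ext i j
  simp [Matrix.conjTranspose_apply, SimpleGraph.adj_comm]

instance {ι : Type*} [DecidableEq ι] (W : ι → Type*) :
    DecidableRel (SimpleGraph.completeMultipartiteGraph W).Adj := fun v w =>
  inferInstanceAs (Decidable (v.1 ≠ w.1))

/-!
Write `s_i` and `q_i` for the sum and the sum of squares of a vector `x` over the `i`-th part,
and `c = n_1` for the largest part size. Then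
`xᵀ A x + c ‖x‖² = (∑ x)² + ∑ᵢ (c q_i - s_i²)`, and every summand is nonnegative by
Cauchy–Schwarz (`s_i² ≤ n_i q_i ≤ c q_i`), so `A + c I` is positive semidefinite.
For an eigenvector of `-c` all summands vanish: `x` is zero on every part smaller than `c`,
and if only one part had size `c`, then `∑ x = 0` would force `x` to vanish there as well.
Conversely, when two parts have size `c`, the vector `1` on one and `-1` on the other is a
`-c`-eigenvector.
-/
open Matrix Finset

namespace Matrix.IsHermitian

variable {N : Type*} [Fintype N] [DecidableEq N] {A : Matrix N N ℝ}

theorem le_eigenvalues_of_forall_mul_dotProduct_self_le (hA : A.IsHermitian) {μ : ℝ}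
    (h : ∀ x : N → ℝ, μ * (x ⬝ᵥ x) ≤ x ⬝ᵥ (A *ᵥ x)) (i : N) : μ ≤ hA.eigenvalues i := by
  have hunit : (hA.eigenvectorBasis i : N → ℝ) ⬝ᵥ hA.eigenvectorBasis i = 1 := by
    have := real_inner_self_eq_norm_sq (hA.eigenvectorBasis i)
    rwa [EuclideanSpace.inner_eq_star_dotProduct, star_trivial,
      hA.eigenvectorBasis.orthonormal.1 i, one_pow] at this
  simpa [hA.eigenvalues_eq i, hunit] using h (hA.eigenvectorBasis i)

theorem exists_eigenvalues_eq_iff (hA : A.IsHermitian) {μ : ℝ} :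
    (∃ i, hA.eigenvalues i = μ) ↔ ∃ x ≠ 0, A *ᵥ x = μ • x := by
  rw [← Set.mem_range, ← hA.spectrum_real_eq_range_eigenvalues, ← spectrum_toLin',
    ← Module.End.hasEigenvalue_iff_mem_spectrum]
  constructor
  · intro h
    obtain ⟨x, hx⟩ := h.exists_hasEigenvector
    exact ⟨x, hx.2, hx.apply_eq_smul⟩
  · rintro ⟨x, hx0, hx⟩
    exact Module.End.hasEigenvalue_of_hasEigenvector ⟨by simpa [Module.End.mem_eigenspace_iff], hx0⟩

end Matrix.IsHermitian

section minEig

variable {N : Type*} [Fintype N] [DecidableEq N] {A : Matrix N N ℝ} {μ : ℝ}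

theorem le_minEig_iff_s8 (hn : Nonempty N) (hA : A.IsHermitian) :
    μ ≤ minEig hn hA ↔ ∀ i, μ ≤ hA.eigenvalues i := by
  simp [minEig, Finset.le_inf'_iff]

theorem minEig_eq_iff_of_le (hn : Nonempty N) (hA : A.IsHermitian)
    (h : ∀ i, μ ≤ hA.eigenvalues i) : minEig hn hA = μ ↔ ∃ i, hA.eigenvalues i = μ := by
  refine ⟨fun heq => ?_, fun ⟨i, hi⟩ => ?_⟩
  · obtain ⟨i, -, hi⟩ := Finset.exists_mem_eq_inf' (Finset.univ_nonempty_iff.mpr hn) hA.eigenvalues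
    exact ⟨i, hi ▸ heq⟩
  · exact le_antisymm (hi ▸ Finset.inf'_le _ (mem_univ i)) ((le_minEig_iff_s8 hn hA).2 h)

end minEig

theorem sq_sum_le_mul_sum_sq_of_card_le {α : Type*} [Fintype α] {c : ℕ}
    (hc : Fintype.card α ≤ c) (f : α → ℝ) : (∑ a, f a) ^ 2 ≤ c * ∑ a, f a ^ 2 :=
  sq_sum_le_card_mul_sum_sq.trans
    (mul_le_mul_of_nonneg_right (by exact_mod_cast hc) (sum_nonneg fun _ _ => sq_nonneg _))

namespace SimpleGraph.completeMultipartiteGraph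

variable {ι : Type*} [Fintype ι] [DecidableEq ι] {W : ι → Type*} [∀ i, Fintype (W i)]

theorem adjMatrix_mulVec_apply (x : Sigma W → ℝ) (v : Sigma W) :
    ((completeMultipartiteGraph W).adjMatrix ℝ *ᵥ x) v = ∑ w, x w - ∑ k, x ⟨v.1, k⟩ := by
  calc ((completeMultipartiteGraph W).adjMatrix ℝ *ᵥ x) v
      = ∑ w : Sigma W, (x w - if w.1 = v.1 then x w else 0) := by
        refine sum_congr rfl fun w _ => ?_
        by_cases h : w.1 = v.1
        · simp [adjMatrix_apply, h]
        · simp [adjMatrix_apply, h, Ne.symm h]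
    _ = _ := by
        rw [sum_sub_distrib, Fintype.sum_sigma (fun w => if w.1 = v.1 then x w else 0),
          Fintype.sum_eq_single v.1 fun i hi => by simp [hi]]
        simp

theorem dotProduct_adjMatrix_mulVec (x : Sigma W → ℝ) :
    x ⬝ᵥ ((completeMultipartiteGraph W).adjMatrix ℝ *ᵥ x) =
      (∑ w, x w) ^ 2 - ∑ i, (∑ k, x ⟨i, k⟩) ^ 2 := by
  simp only [dotProduct, adjMatrix_mulVec_apply, mul_sub,
    sum_sub_distrib, ← sum_mul, Fintype.sum_sigma (fun v => x v * ∑ k, x ⟨v.1, k⟩), sq]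
  simp [sum_mul]

theorem neg_mul_dotProduct_self_le {c : ℕ}
    (hc : ∀ i, Fintype.card (W i) ≤ c) (x : Sigma W → ℝ) :
    -(c : ℝ) * (x ⬝ᵥ x) ≤ x ⬝ᵥ ((completeMultipartiteGraph W).adjMatrix ℝ *ᵥ x) := by
  have hparts : ∑ i, (∑ k, x ⟨i, k⟩) ^ 2 ≤ c * (x ⬝ᵥ x) := by
    rw [dotProduct, Fintype.sum_sigma, mul_sum]
    exact sum_le_sum fun i _ => by
      simpa [sq] using sq_sum_le_mul_sum_sq_of_card_le (hc i) fun k => x ⟨i, k⟩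
  rw [dotProduct_adjMatrix_mulVec]
  nlinarith [sq_nonneg (∑ w, x w)]

theorem sum_eq_zero_and_sq_sum_eq_of_adjMatrix_mulVec_eq_neg_smul {c : ℕ}
    (hc : ∀ i, Fintype.card (W i) ≤ c) {x : Sigma W → ℝ}
    (hx : (completeMultipartiteGraph W).adjMatrix ℝ *ᵥ x = -(c : ℝ) • x) :
    ∑ w, x w = 0 ∧ ∀ i, (∑ k, x ⟨i, k⟩) ^ 2 = c * ∑ k, x ⟨i, k⟩ ^ 2 := by
  have hslack : ∀ i, 0 ≤ c * ∑ k, x ⟨i, k⟩ ^ 2 - (∑ k, x ⟨i, k⟩) ^ 2 := fun i =>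
    sub_nonneg.2 (sq_sum_le_mul_sum_sq_of_card_le (hc i) _)
  have hzero : (∑ w, x w) ^ 2 + ∑ i, (c * ∑ k, x ⟨i, k⟩ ^ 2 - (∑ k, x ⟨i, k⟩) ^ 2) = 0 := by
    have := dotProduct_adjMatrix_mulVec x
    rw [hx, dotProduct_smul, dotProduct, Fintype.sum_sigma] at this
    simp only [smul_eq_mul, ← sq] at this
    rw [sum_sub_distrib, ← mul_sum]
    linarith
  obtain ⟨hS, hslack0⟩ :=
    (add_eq_zero_iff_of_nonneg (sq_nonneg _) (sum_nonneg fun i _ => hslack i)).1 hzero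
  refine ⟨pow_eq_zero_iff two_ne_zero |>.1 hS, fun i => ?_⟩
  linarith [(sum_eq_zero_iff_of_nonneg fun i _ => hslack i).1 hslack0 i (mem_univ i)]

theorem exists_ne_card_eq_of_adjMatrix_mulVec_eq_neg_smul {c : ℕ}
    (hc : ∀ i, Fintype.card (W i) ≤ c) {x : Sigma W → ℝ} (hx0 : x ≠ 0)
    (hx : (completeMultipartiteGraph W).adjMatrix ℝ *ᵥ x = -(c : ℝ) • x) :
    ∃ i j, i ≠ j ∧ Fintype.card (W i) = c ∧ Fintype.card (W j) = c := by
  obtain ⟨hS, hpart⟩ := sum_eq_zero_and_sq_sum_eq_of_adjMatrix_mulVec_eq_neg_smul hc hx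
  have hvanish : ∀ i, ∑ k, x ⟨i, k⟩ ^ 2 = 0 → ∀ k, x ⟨i, k⟩ = 0 := fun i h k =>
    pow_eq_zero_iff two_ne_zero |>.1 ((sum_eq_zero_iff_of_nonneg fun _ _ => sq_nonneg _).1 h k
      (mem_univ k))
  have hsmall : ∀ i, Fintype.card (W i) < c → ∀ k, x ⟨i, k⟩ = 0 := fun i h => by
    refine hvanish i (le_antisymm ?_ (sum_nonneg fun _ _ => sq_nonneg _))
    have hcs := sq_sum_le_mul_sum_sq_of_card_le le_rfl fun k => x ⟨i, k⟩
    have hlt : (Fintype.card (W i) : ℝ) < c := by exact_mod_cast h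
    nlinarith [hpart i, sum_nonneg fun k (_ : k ∈ univ) => sq_nonneg (x ⟨i, k⟩)]
  obtain ⟨⟨i, k⟩, hik⟩ := Function.ne_iff.1 hx0
  have hi : Fintype.card (W i) = c := le_antisymm (hc i) (not_lt.1 fun h => hik (hsmall i h k))
  refine ⟨i, ?_⟩
  by_contra! hj
  have hothers : ∀ j ≠ i, ∀ k, x ⟨j, k⟩ = 0 := fun j hji =>
    hsmall j ((hc j).lt_of_ne (hj j (Ne.symm hji) hi))
  have hsi : ∑ k, x ⟨i, k⟩ = 0 := by
    rw [← hS, Fintype.sum_sigma,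
      Fintype.sum_eq_single i fun j hji => sum_eq_zero fun k _ => hothers j hji k]
  have hcpos : (0 : ℝ) < c := by rw [← hi]; exact_mod_cast Fintype.card_pos_iff.2 ⟨k⟩
  have hq : c * ∑ k, x ⟨i, k⟩ ^ 2 = 0 := by rw [← hpart, hsi]; ring
  exact hik (hvanish i ((mul_eq_zero.1 hq).resolve_left hcpos.ne') k)

theorem exists_adjMatrix_mulVec_eq_neg_smul_of_card_eq {i j : ι} (hij : i ≠ j)
    (hcard : Fintype.card (W i) = Fintype.card (W j)) (hne : Nonempty (W i)) :
    ∃ x ≠ 0, (completeMultipartiteGraph W).adjMatrix ℝ *ᵥ x = -(Fintype.card (W i) : ℝ) • x := by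
  set f : ι → ℝ := fun l => (if l = i then 1 else 0) - if l = j then 1 else 0
  have hweighted : ∀ l, Fintype.card (W l) * f l = Fintype.card (W i) * f l := fun l => by
    by_cases hli : l = i
    · rw [hli]
    · by_cases hlj : l = j <;> simp [f, hli, hlj, hcard]
  refine ⟨fun v => f v.1, Function.ne_iff.2 ⟨⟨i, hne.some⟩, by simp [f, hij]⟩, funext fun v => ?_⟩
  simp only [adjMatrix_mulVec_apply, Fintype.sum_sigma, sum_const,
    card_univ, nsmul_eq_mul, hweighted, ← mul_sum, Pi.smul_apply, smul_eq_mul]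
  simp [f, sum_sub_distrib]

end SimpleGraph.completeMultipartiteGraph

/-- The complete multipartite graph with part sizes `n 0 ≥ n 1 ≥ ⋯ ≥ n (m-1)`
(all positive, `m ≥ 2`) has smallest adjacency eigenvalue at least `-(n 0)`, with
equality iff the two largest parts have equal size. -/
theorem stmt8 (m : ℕ) (hm : 2 ≤ m) (n : Fin m → ℕ) (hpos : ∀ i, 0 < n i)
    (hmono : Antitone n) :
    minEig (⟨⟨⟨0, by omega⟩, ⟨0, hpos _⟩⟩⟩ : Nonempty (Σ i : Fin m, Fin (n i)))
        (adjHerm (SimpleGraph.completeMultipartiteGraph (fun i : Fin m => Fin (n i)))) ≥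
      -(n ⟨0, by omega⟩ : ℝ) ∧
    (minEig (⟨⟨⟨0, by omega⟩, ⟨0, hpos _⟩⟩⟩ : Nonempty (Σ i : Fin m, Fin (n i)))
        (adjHerm (SimpleGraph.completeMultipartiteGraph (fun i : Fin m => Fin (n i)))) =
        -(n ⟨0, by omega⟩ : ℝ) ↔ n ⟨0, by omega⟩ = n ⟨1, by omega⟩) := by
  set hA := adjHerm (SimpleGraph.completeMultipartiteGraph fun i : Fin m => Fin (n i))
  have hcard : ∀ i, Fintype.card (Fin (n i)) ≤ n ⟨0, by omega⟩ := fun i => by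
    simpa using hmono (Fin.mk_le_of_le_val (Nat.zero_le i))
  have hbound := hA.le_eigenvalues_of_forall_mul_dotProduct_self_le
    (SimpleGraph.completeMultipartiteGraph.neg_mul_dotProduct_self_le hcard)
  refine ⟨(le_minEig_iff_s8 _ hA).2 hbound, ?_⟩
  rw [minEig_eq_iff_of_le _ hA hbound, hA.exists_eigenvalues_eq_iff]
  constructor
  · rintro ⟨x, hx0, hx⟩
    obtain ⟨i, j, hij, hi, hj⟩ :=
      SimpleGraph.completeMultipartiteGraph.exists_ne_card_eq_of_adjMatrix_mulVec_eq_neg_smul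
        hcard hx0 hx
    obtain ⟨l, hl0, hl⟩ : ∃ l : Fin m, l.val ≠ 0 ∧ n l = n ⟨0, by omega⟩ := by
      by_cases hi0 : i.val = 0
      · exact ⟨j, fun hj0 => hij (Fin.ext (hi0.trans hj0.symm)), by simpa using hj⟩
      · exact ⟨i, hi0, by simpa using hi⟩
    exact le_antisymm (hl ▸ hmono (Fin.mk_le_of_le_val (by omega)))
      (hmono (Fin.mk_le_of_le_val (Nat.zero_le _)))
  · intro h01
    simpa using SimpleGraph.completeMultipartiteGraph.exists_adjMatrix_mulVec_eq_neg_smul_of_card_eq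
      (W := fun i : Fin m => Fin (n i)) (i := ⟨0, by omega⟩) (j := ⟨1, by omega⟩) (by simp)
      (by simp [h01]) ⟨⟨0, hpos _⟩⟩
end

section
/- If a finite simple graph G admits an edge partition into cliques such that each vertex lies in at most two of the cliques, then the smallest adjacency eigenvalue of G is at least -2. -/
open Finset Matrix

theorem Matrix.IsHermitian.neg_le_eigenvalues_of_posSemidef_add_smul_one {n : Type*} [Fintype n]
    [DecidableEq n] {A : Matrix n n ℝ} (hA : A.IsHermitian) {c : ℝ}
    (hc : (A + c • 1).PosSemidef) (i : n) : -c ≤ hA.eigenvalues i := by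
  have hmem : hA.eigenvalues i + c ∈ spectrum ℝ (algebraMap ℝ _ c + A) :=
    spectrum.add_mem_add_iff.mpr (hA.eigenvalues_mem_spectrum_real i)
  rw [Algebra.algebraMap_eq_smul_one, add_comm] at hmem
  have hnonneg : 0 ≤ hA.eigenvalues i + c :=
    (posSemidef_iff_isHermitian_and_spectrum_nonneg.mp hc).2 hmem
  linarith

section

variable {V ι : Type*} [DecidableEq V] [Fintype ι]

def membershipMatrix (K : ι → Finset V) : Matrix V ι ℝ :=
  Matrix.of fun u j => if u ∈ K j then 1 else 0

theorem membershipMatrix_mul_transpose_apply (K : ι → Finset V) (u v : V) :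
    (membershipMatrix K * (membershipMatrix K)ᵀ) u v = #{j | u ∈ K j ∧ v ∈ K j} := by
  simp only [membershipMatrix, mul_apply, transpose_apply, of_apply, ite_zero_mul_ite_zero,
    mul_one, sum_boole]

theorem SimpleGraph.adjMatrix_add_diagonal_eq_of_cliquePartition (G : SimpleGraph V)
    [DecidableRel G.Adj] {K : ι → Finset V} (hclique : ∀ j, G.IsClique (K j))
    (hpart : ∀ u v, G.Adj u v → ∃! j, u ∈ K j ∧ v ∈ K j) :
    G.adjMatrix ℝ + diagonal (fun u => (#{j | u ∈ K j} : ℝ)) =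
      membershipMatrix K * (membershipMatrix K)ᵀ := by
  ext u v
  rw [Matrix.add_apply, membershipMatrix_mul_transpose_apply]
  rcases eq_or_ne u v with rfl | huv
  · simp
  rw [diagonal_apply_ne _ huv, add_zero]
  by_cases hadj : G.Adj u v
  · obtain ⟨j, hj, huniq⟩ := hpart u v hadj
    have hshared : ({j | u ∈ K j ∧ v ∈ K j} : Finset ι) = {j} := by
      ext i
      simp only [mem_filter, mem_univ, true_and, mem_singleton]
      exact ⟨huniq i, by rintro rfl; exact hj⟩
    simp [hshared, hadj]
  · have hshared : ({j | u ∈ K j ∧ v ∈ K j} : Finset ι) = ∅ :=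
      filter_eq_empty_iff.mpr fun j _ ⟨hu, hv⟩ => hadj (hclique j hu hv huv)
    simp [hshared, hadj]

theorem SimpleGraph.posSemidef_adjMatrix_add_smul_one_of_cliquePartition [Fintype V]
    (G : SimpleGraph V) [DecidableRel G.Adj] {K : ι → Finset V}
    (hclique : ∀ j, G.IsClique (K j))
    (hpart : ∀ u v, G.Adj u v → ∃! j, u ∈ K j ∧ v ∈ K j) {r : ℕ}
    (hr : ∀ u, #{j | u ∈ K j} ≤ r) :
    (G.adjMatrix ℝ + (r : ℝ) • 1).PosSemidef := by
  set c : V → ℝ := fun u => #{j | u ∈ K j}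
  have hsplit : G.adjMatrix ℝ + (r : ℝ) • 1 =
      (G.adjMatrix ℝ + diagonal c) + diagonal fun u => r - c u := by
    rw [add_assoc, diagonal_add, smul_one_eq_diagonal]
    simp
  rw [hsplit, G.adjMatrix_add_diagonal_eq_of_cliquePartition hclique hpart,
    ← conjTranspose_eq_transpose_of_trivial]
  exact (posSemidef_self_mul_conjTranspose _).add
    (PosSemidef.diagonal fun u => sub_nonneg.mpr (Nat.cast_le.mpr (hr u)))

end

/-- If the edge set of a finite simple graph `G` can be partitioned into cliques
(each edge lies in exactly one clique) such that every vertex belongs to at most two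
of the cliques, then the smallest adjacency eigenvalue of `G` is at least `-2`. -/
theorem stmt10 {V : Type*} [Fintype V] [DecidableEq V] (hV : Nonempty V)
    (G : SimpleGraph V) [DecidableRel G.Adj] {m : ℕ} (K : Fin m → Finset V)
    (hclique : ∀ j, G.IsClique (K j))
    (hpart : ∀ u v : V, G.Adj u v → ∃! j, u ∈ K j ∧ v ∈ K j)
    (hr : ∀ u : V, (Finset.univ.filter fun j => u ∈ K j).card ≤ 2) :
    minEig hV (adjHerm G) ≥ -2 := by
  have hpsd := G.posSemidef_adjMatrix_add_smul_one_of_cliquePartition hclique hpart hr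
  exact Finset.le_inf' _ _ fun i _ => by
    simpa using (adjHerm G).neg_le_eigenvalues_of_posSemidef_add_smul_one hpsd i
end

section
/- Let G be a finite simple graph, K a clique partition of μG where the smallest clique order is c. For a vertex u of degree d_u in G, if e_u denotes the number of cliques of order exactly c containing u and r_u the total number of cliques containing u, then r_u ≤ (μ d_u + e_u)/c, with equality iff every clique containing u has order c or c+1. -/
/-- Let `K` be a clique partition of `μG` whose smallest clique order is `c`.  For a
vertex `u` of degree `d_u`, if `e_u` is the number of cliques of order exactly `c`
containing `u` and `r_u` the total number of cliques containing `u`, then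
`r_u ≤ (μ d_u + e_u)/c`, with equality iff every clique containing `u` has order
`c` or `c + 1`. -/
theorem stmt14 {V : Type*} [Fintype V] [DecidableEq V]
    (G : SimpleGraph V) [DecidableRel G.Adj] {m : ℕ} (K : Fin m → Finset V)
    (μ c : ℕ) (hμ : 1 ≤ μ) (hc : 2 ≤ c)
    (hclique : ∀ j, G.IsClique (K j))
    (hcard : ∀ j, c ≤ (K j).card) (hmin : ∃ j, (K j).card = c)
    (hpart : ∀ u v : V, G.Adj u v →
      (Finset.univ.filter fun j => u ∈ K j ∧ v ∈ K j).card = μ)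
    (u : V) (ru eu : ℕ)
    (hru : ru = (Finset.univ.filter fun j => u ∈ K j).card)
    (heu : eu = (Finset.univ.filter fun j => u ∈ K j ∧ (K j).card = c).card) :
    (ru : ℝ) ≤ ((μ : ℝ) * (G.degree u) + eu) / c ∧
    ((ru : ℝ) = ((μ : ℝ) * (G.degree u) + eu) / c ↔
      ∀ j, u ∈ K j → (K j).card = c ∨ (K j).card = c + 1) := by
  classical
  set S : Finset (Fin m) := Finset.univ.filter fun j => u ∈ K j with hS
  -- key counting: μ * d_u = ∑_{j ∈ S} (|K j| - 1)
  have hkey : μ * G.degree u = ∑ j ∈ S, ((K j).card - 1) := by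
    have h1 : μ * G.degree u
        = ∑ v ∈ G.neighborFinset u,
            (Finset.univ.filter fun j => u ∈ K j ∧ v ∈ K j).card := by
      rw [SimpleGraph.degree]
      rw [Finset.card_eq_sum_ones (G.neighborFinset u), Finset.mul_sum]
      refine Finset.sum_congr rfl fun v hv => ?_
      rw [hpart u v (by rwa [← SimpleGraph.mem_neighborFinset]), mul_one]
    rw [h1]
    have h2 : ∀ v, (Finset.univ.filter fun j => u ∈ K j ∧ v ∈ K j).card
        = ∑ j : Fin m, (if u ∈ K j ∧ v ∈ K j then 1 else 0) := by
      intro v; rw [Finset.card_filter]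
    simp_rw [h2]
    rw [Finset.sum_comm]
    have h3 : ∀ j : Fin m,
        (∑ v ∈ G.neighborFinset u, if u ∈ K j ∧ v ∈ K j then 1 else 0)
        = if u ∈ K j then ((K j).card - 1) else 0 := by
      intro j
      by_cases hj : u ∈ K j
      · simp only [hj, true_and, if_pos]
        rw [← Finset.card_filter]
        congr 1
        have : G.neighborFinset u ∩ K j = (K j).erase u := by
          ext v
          simp only [Finset.mem_inter, SimpleGraph.mem_neighborFinset, Finset.mem_erase]
          constructor
          · rintro ⟨hadj, hv⟩; exact ⟨hadj.ne', hv⟩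
          · rintro ⟨hne, hv⟩; exact ⟨hclique j hj hv (Ne.symm hne), hv⟩
        rw [Finset.filter_mem_eq_inter, this, Finset.card_erase_of_mem hj]
      · simp [hj]
    simp_rw [h3]
    rw [← Finset.sum_filter]
  -- the ℕ inequality and equality characterization
  have hterm : ∀ j ∈ S, c ≤ ((K j).card - 1) + (if (K j).card = c then 1 else 0) := by
    intro j hj
    by_cases h : (K j).card = c
    · simp [h]; omega
    · have := hcard j; simp [h]; omega
  have heu' : eu = ∑ j ∈ S, (if (K j).card = c then 1 else 0) := by
    rw [heu, Finset.card_filter, Finset.sum_filter]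
    simp [hS, ite_and]
  have hsum : μ * G.degree u + eu
      = ∑ j ∈ S, (((K j).card - 1) + (if (K j).card = c then 1 else 0)) := by
    rw [hkey, heu', ← Finset.sum_add_distrib]
  have hcr : c * ru = ∑ j ∈ S, c := by
    rw [hru, Finset.sum_const, smul_eq_mul, mul_comm]
  have hle : c * ru ≤ μ * G.degree u + eu := by
    rw [hcr, hsum]; exact Finset.sum_le_sum hterm
  have heqiff : c * ru = μ * G.degree u + eu ↔
      ∀ j, u ∈ K j → (K j).card = c ∨ (K j).card = c + 1 := by
    rw [hcr, hsum]
    rw [Finset.sum_eq_sum_iff_of_le hterm]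
    constructor
    · intro h j hj
      have := h j (by simp [hS, hj])
      have hcj := hcard j
      by_cases hcase : (K j).card = c
      · exact Or.inl hcase
      · right; simp [hcase] at this; omega
    · intro h j hj
      have hj' : u ∈ K j := by simpa [hS] using hj
      rcases h j hj' with h1 | h1 <;> simp [h1] <;> omega
  have hc0 : (0:ℝ) < c := by positivity
  constructor
  · rw [le_div_iff₀ hc0]
    have : (ru:ℝ) * c = ((c * ru : ℕ) : ℝ) := by push_cast; ring
    rw [this]
    exact_mod_cast hle
  · rw [eq_div_iff (ne_of_gt hc0), ← heqiff]
    constructor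
    · intro h
      have : ((c * ru : ℕ) : ℝ) = ((μ * G.degree u + eu : ℕ) : ℝ) := by
        push_cast; linarith
      exact_mod_cast this
    · intro h
      have : ((c * ru : ℕ) : ℝ) = ((μ * G.degree u + eu : ℕ) : ℝ) := by exact_mod_cast h
      push_cast at this; linarith
end

section
/- Let G be a k-regular simple graph on n vertices with independence number α. Then the smallest adjacency eigenvalue λ of G satisfies λ ≤ -αk/(n-α). -/
/-!
By the Rayleigh principle, `λ_min ‖x‖² ≤ xᵀ A x` for every real vector `x`. For an independent
set `S` of size `a` in a `k`-regular graph on `n` vertices, test this on `x = n 𝟙_S - a 𝟙`: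
since `A 𝟙 = k 𝟙` and `𝟙_Sᵀ A 𝟙_S = 0`, one gets `‖x‖² = n a (n - a)` and `xᵀ A x = -k n a²`,
hence `λ_min (n - a) ≤ -a k`.
-/

open Matrix

theorem minEig_mul_dotProduct_self_le_s15 {n : Type*} [Fintype n] [DecidableEq n] (hn : Nonempty n)
    {A : Matrix n n ℝ} (hA : A.IsHermitian) (x : n → ℝ) :
    minEig hn hA * (x ⬝ᵥ x) ≤ x ⬝ᵥ (A *ᵥ x) := by
  set b := hA.eigenvectorBasis
  set y : EuclideanSpace ℝ n := WithLp.toLp 2 x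
  have hAb (i : n) :
      inner ℝ (b i) (WithLp.toLp 2 (A *ᵥ x)) = hA.eigenvalues i * inner ℝ (b i) y := by
    simp only [EuclideanSpace.inner_eq_star_dotProduct, star_trivial]
    rw [dotProduct_comm, dotProduct_mulVec, ← mulVec_transpose,
      ← conjTranspose_eq_transpose_of_trivial, hA.eq, hA.mulVec_eigenvectorBasis,
      smul_dotProduct, smul_eq_mul, dotProduct_comm]
  calc minEig hn hA * (x ⬝ᵥ x)
      = ∑ i, minEig hn hA * (inner ℝ y (b i) * inner ℝ (b i) y) := by
        rw [← Finset.mul_sum, b.sum_inner_mul_inner]; rfl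
    _ ≤ ∑ i, hA.eigenvalues i * (inner ℝ y (b i) * inner ℝ (b i) y) := by
        gcongr with i
        · rw [real_inner_comm]; exact mul_self_nonneg _
        · exact Finset.inf'_le _ (Finset.mem_univ i)
    _ = x ⬝ᵥ (A *ᵥ x) := by
        simp_rw [mul_left_comm _ (inner ℝ y _), ← hAb, b.sum_inner_mul_inner]
        exact dotProduct_comm _ _

theorem Finset.indicator_one_dotProduct {V R : Type*} [Fintype V] [NonAssocSemiring R]
    (s : Finset V) (y : V → R) : (s : Set V).indicator 1 ⬝ᵥ y = ∑ v ∈ s, y v := by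
  classical
  simp [dotProduct, Set.indicator_apply, Finset.sum_ite_mem]

namespace SimpleGraph

variable {V : Type*} [Fintype V] {G : SimpleGraph V} [DecidableRel G.Adj] {k : ℕ}

theorem dotProduct_mulVec_adjMatrix_indicator_of_isIndepSet {R : Type*} [NonAssocSemiring R]
    {s : Finset V} (hs : G.IsIndepSet s) :
    (s : Set V).indicator 1 ⬝ᵥ G.adjMatrix R *ᵥ (s : Set V).indicator (1 : V → R) = 0 := by
  rw [dotProduct_mulVec_adjMatrix]
  refine Finset.sum_eq_zero fun u _ => Finset.sum_eq_zero fun v _ => ?_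
  by_cases hu : u ∈ s <;> by_cases hv : v ∈ s <;> simp [hu, hv]
  exact fun huv => (hs hu hv (G.ne_of_adj huv) huv).elim

theorem adjMatrix_mulVec_one_of_isRegularOfDegree {R : Type*} [NonAssocSemiring R]
    (hreg : G.IsRegularOfDegree k) : G.adjMatrix R *ᵥ 1 = (k : R) • 1 := by
  ext v
  simp [hreg v]

variable [DecidableEq V]

theorem minEig_adjMatrix_le_of_isRegularOfDegree (hV : Nonempty V)
    (hreg : G.IsRegularOfDegree k) : minEig hV (adjHerm G) ≤ k := by
  have h := minEig_mul_dotProduct_self_le_s15 hV (adjHerm G) 1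
  rw [adjMatrix_mulVec_one_of_isRegularOfDegree hreg, dotProduct_smul, smul_eq_mul] at h
  have hpos : 0 < (1 : V → ℝ) ⬝ᵥ 1 := by simpa using Fintype.card_pos_iff.mpr hV
  exact le_of_mul_le_mul_right h hpos

theorem IsIndepSet.minEig_adjMatrix_mul_le (hV : Nonempty V) (hreg : G.IsRegularOfDegree k)
    {s : Finset V} (hs : G.IsIndepSet s) (hne : s.Nonempty) :
    minEig hV (adjHerm G) * (Fintype.card V - s.card) ≤ -(s.card * k) := by
  set A := G.adjMatrix ℝ
  set χ : V → ℝ := (s : Set V).indicator 1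
  set n : ℝ := (Fintype.card V : ℝ)
  set a : ℝ := (s.card : ℝ)
  have h11 : (1 : V → ℝ) ⬝ᵥ 1 = n := by simp [n]
  have hχ1 : χ ⬝ᵥ 1 = a := by simp [χ, a, Finset.indicator_one_dotProduct]
  have hχχ : χ ⬝ᵥ χ = a := by
    simp +contextual [χ, a, Finset.indicator_one_dotProduct, Set.indicator_of_mem]
  have hA1 : A *ᵥ 1 = (k : ℝ) • 1 := adjMatrix_mulVec_one_of_isRegularOfDegree hreg
  have hAχ : (1 : V → ℝ) ⬝ᵥ A *ᵥ χ = a * k := by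
    rw [dotProduct_mulVec, ← mulVec_transpose, transpose_adjMatrix, hA1, dotProduct_comm,
      dotProduct_smul, hχ1, smul_eq_mul, mul_comm]
  have hχAχ : χ ⬝ᵥ A *ᵥ χ = 0 := dotProduct_mulVec_adjMatrix_indicator_of_isIndepSet hs
  set x : V → ℝ := n • χ - a • 1
  have hxx : x ⬝ᵥ x = n * a * (n - a) := by
    simp only [x, sub_dotProduct, dotProduct_sub, smul_dotProduct, dotProduct_smul, smul_eq_mul,
      hχχ, hχ1, dotProduct_comm 1 χ, h11]
    ring
  have hxAx : x ⬝ᵥ A *ᵥ x = -(k * n * a ^ 2) := by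
    simp only [x, mulVec_sub, mulVec_smul, sub_dotProduct, dotProduct_sub, smul_dotProduct,
      dotProduct_smul, smul_eq_mul, hχAχ, hAχ, hA1, hχ1, h11]
    ring
  have hna : 0 < n * a := by
    have : 0 < Fintype.card V := Fintype.card_pos
    positivity
  have h := minEig_mul_dotProduct_self_le_s15 hV (adjHerm G) x
  rw [hxx, hxAx] at h
  refine le_of_mul_le_mul_left ?_ hna
  linarith

end SimpleGraph

open SimpleGraph in
/-- Hoffman's ratio bound: if `G` is a `k`-regular simple graph on `n` vertices with
independence number `α` (the size of a largest set of pairwise nonadjacent vertices),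
then the smallest adjacency eigenvalue `λ` of `G` satisfies `λ ≤ -αk/(n - α)`. -/
theorem stmt15 {V : Type*} [Fintype V] [DecidableEq V] (hV : Nonempty V)
    (G : SimpleGraph V) [DecidableRel G.Adj] (k : ℕ) (hreg : G.IsRegularOfDegree k)
    (α : ℕ)
    (hα : IsGreatest {a : ℕ | ∃ s : Finset V,
      (∀ u ∈ s, ∀ v ∈ s, u ≠ v → ¬ G.Adj u v) ∧ s.card = a} α) :
    minEig hV (adjHerm G) ≤ -((α : ℝ) * k) / ((Fintype.card V : ℝ) - α) := by
  obtain ⟨⟨s, hs, rfl⟩, hmax⟩ := hα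
  have hne : s.Nonempty := by
    rw [← Finset.card_pos]
    exact hmax ⟨{hV.some}, by simp, Finset.card_singleton _⟩
  have key := IsIndepSet.minEig_adjMatrix_mul_le hV hreg hs hne
  rcases (Finset.card_le_univ s).lt_or_eq with hlt | heq
  · have hpos : (0 : ℝ) < Fintype.card V - s.card := sub_pos.mpr (by exact_mod_cast hlt)
    rwa [le_div_iff₀ hpos]
  · -- `α = n`: the bound degenerates to `λ ≤ 0` (division by zero), and `key` forces `k = 0`
    rw [heq, sub_self, div_zero]
    rw [heq, sub_self, mul_zero, neg_nonneg] at key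
    have hk : (k : ℝ) ≤ 0 :=
      nonpos_of_mul_nonpos_right key (by exact_mod_cast Fintype.card_pos_iff.mpr hV)
    exact (minEig_adjMatrix_le_of_isRegularOfDegree hV hreg).trans hk
end

section
/- Let G be a connected d-regular graph in which every vertex is contained in at least m triangles and every edge is contained in at most t triangles, with t ≥ 1. Then the smallest adjacency eigenvalue of G satisfies λ(G) ≥ -d + m/t. -/
/-!
For a unit eigenvector `x` of `λ` in a `d`-regular graph, the sum of `(x u + x v) ^ 2` over
ordered adjacent pairs is `2 (d + λ)`. Summing `(x u + x v) ^ 2` over ordered triangles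
`(u, v, w)` counts each ordered edge at most `t` times, so it is at most `2 t (d + λ)`. On the
other hand, since `(a + b)² + (b + c)² + (c + a)² ≥ a² + b² + c²`, the same sum dominates
`∑ w, x w ^ 2` weighted by the number of ordered triangles at `w`, which is at least `2 m`.
-/

open Finset Matrix

namespace SimpleGraph

variable {V : Type*} [Fintype V] (G : SimpleGraph V) [DecidableRel G.Adj]

def triangleTriples : Finset (V × V × V) :=
  univ.filter fun p => G.Adj p.1 p.2.1 ∧ G.Adj p.2.1 p.2.2 ∧ G.Adj p.2.2 p.1

def triangleNeighborPairs (v : V) : Finset (V × V) :=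
  univ.filter fun p => G.Adj v p.1 ∧ G.Adj v p.2 ∧ G.Adj p.1 p.2

theorem sum_triangleTriples_rotate {M : Type*} [AddCommMonoid M] (f : V × V × V → M) :
    ∑ p ∈ G.triangleTriples, f (p.2.1, p.2.2, p.1) = ∑ p ∈ G.triangleTriples, f p :=
  sum_nbij' (fun p => (p.2.1, p.2.2, p.1)) (fun p => (p.2.2, p.1, p.2.1))
    (fun p hp => by simp_all [triangleTriples]) (fun p hp => by simp_all [triangleTriples])
    (fun _ _ => rfl) (fun _ _ => rfl) (fun _ _ => rfl)

theorem sum_triangleTriples_sq_le (x : V → ℝ) :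
    ∑ p ∈ G.triangleTriples, x p.2.2 ^ 2 ≤ ∑ p ∈ G.triangleTriples, (x p.1 + x p.2.1) ^ 2 := by
  -- `(a + b + c)² = (a + b)² + (b + c)² + (c + a)² - a² - b² - c²`, and rotating the triangle
  -- identifies the three sums of each kind.
  have hnonneg : 0 ≤ ∑ p ∈ G.triangleTriples, (x p.1 + x p.2.1 + x p.2.2) ^ 2 :=
    sum_nonneg fun p _ => sq_nonneg _
  have hexpand : ∑ p ∈ G.triangleTriples, (x p.1 + x p.2.1 + x p.2.2) ^ 2 =
      ∑ p ∈ G.triangleTriples, (x p.1 + x p.2.1) ^ 2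
        + ∑ p ∈ G.triangleTriples, (x p.2.1 + x p.2.2) ^ 2
        + ∑ p ∈ G.triangleTriples, (x p.2.2 + x p.1) ^ 2
        - ∑ p ∈ G.triangleTriples, x p.1 ^ 2 - ∑ p ∈ G.triangleTriples, x p.2.1 ^ 2
        - ∑ p ∈ G.triangleTriples, x p.2.2 ^ 2 := by
    simp only [← sum_add_distrib, ← sum_sub_distrib]
    exact sum_congr rfl fun p _ => by ring
  have h₁ := G.sum_triangleTriples_rotate fun p => (x p.1 + x p.2.1) ^ 2
  have h₂ := G.sum_triangleTriples_rotate fun p => (x p.2.1 + x p.2.2) ^ 2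
  have h₃ := G.sum_triangleTriples_rotate fun p => x p.1 ^ 2
  have h₄ := G.sum_triangleTriples_rotate fun p => x p.2.2 ^ 2
  simp only at h₁ h₂ h₃ h₄
  linarith

theorem sum_triangleTriples_fst {M : Type*} [AddCommMonoid M] (f : V → M) :
    ∑ p ∈ G.triangleTriples, f p.1 = ∑ v, #(G.triangleNeighborPairs v) • f v := by
  rw [triangleTriples, sum_filter, Fintype.sum_prod_type]
  refine sum_congr rfl fun v _ => ?_
  simp only [← sum_filter, sum_const]
  congr 2
  ext p
  simp only [triangleNeighborPairs, mem_filter, mem_univ, true_and, G.adj_comm p.2 v,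
    and_congr_right_iff]
  tauto

theorem sum_triangleTriples_le [DecidableEq V] {t : ℕ}
    (ht : ∀ u v, G.Adj u v → #(G.neighborFinset u ∩ G.neighborFinset v) ≤ t)
    (g : V → V → ℝ) (hg : ∀ u v, 0 ≤ g u v) :
    ∑ p ∈ G.triangleTriples, g p.1 p.2.1 ≤ t * ∑ u, ∑ v ∈ G.neighborFinset u, g u v := by
  simp only [triangleTriples, sum_filter, Fintype.sum_prod_type, mul_sum,
    neighborFinset_eq_filter]
  gcongr with u _ v
  by_cases huv : G.Adj u v
  · have hcommon : #(univ.filter fun w => G.Adj v w ∧ G.Adj w u) ≤ t := by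
      convert ht u v huv using 2
      ext w
      simp [G.adj_comm w u, and_comm]
    simp only [huv, true_and, if_true, ← sum_filter, sum_const, nsmul_eq_mul]
    gcongr
    exact hg u v
  · simp [huv]

theorem two_mul_mul_sum_sq_le_mul_sum_neighborFinset_add_sq [DecidableEq V] {m t : ℕ}
    (hm : ∀ v, 2 * m ≤ #(G.triangleNeighborPairs v))
    (ht : ∀ u v, G.Adj u v → #(G.neighborFinset u ∩ G.neighborFinset v) ≤ t) (x : V → ℝ) :
    2 * m * ∑ v, x v ^ 2 ≤ t * ∑ u, ∑ v ∈ G.neighborFinset u, (x u + x v) ^ 2 :=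
  calc 2 * m * ∑ v, x v ^ 2
      ≤ ∑ v, #(G.triangleNeighborPairs v) • x v ^ 2 := by
        rw [mul_sum]
        gcongr with v
        rw [nsmul_eq_mul]
        gcongr
        exact_mod_cast hm v
    _ = ∑ p ∈ G.triangleTriples, x p.1 ^ 2 := (G.sum_triangleTriples_fst _).symm
    _ = ∑ p ∈ G.triangleTriples, x p.2.2 ^ 2 :=
        G.sum_triangleTriples_rotate fun p => x p.2.2 ^ 2
    _ ≤ ∑ p ∈ G.triangleTriples, (x p.1 + x p.2.1) ^ 2 := G.sum_triangleTriples_sq_le x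
    _ ≤ t * ∑ u, ∑ v ∈ G.neighborFinset u, (x u + x v) ^ 2 :=
        G.sum_triangleTriples_le ht (fun u v => (x u + x v) ^ 2) fun _ _ => sq_nonneg _

theorem IsRegularOfDegree.sum_neighborFinset_add_sq {d : ℕ} (hreg : G.IsRegularOfDegree d)
    (x : V → ℝ) :
    ∑ u, ∑ v ∈ G.neighborFinset u, (x u + x v) ^ 2 =
      2 * (d * ∑ v, x v ^ 2 + x ⬝ᵥ (G.adjMatrix ℝ *ᵥ x)) := by
  have hswap : ∑ u, ∑ v ∈ G.neighborFinset u, x v ^ 2 =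
      ∑ u, ∑ v ∈ G.neighborFinset u, x u ^ 2 :=
    sum_comm' fun u v => by simp [G.adj_comm]
  have hdeg : ∑ u, ∑ v ∈ G.neighborFinset u, x u ^ 2 = d * ∑ v, x v ^ 2 := by
    simp [sum_const, card_neighborFinset_eq_degree, hreg.degree_eq, mul_sum]
  have hquad : x ⬝ᵥ (G.adjMatrix ℝ *ᵥ x) = ∑ u, ∑ v ∈ G.neighborFinset u, x u * x v := by
    simp [dotProduct, mul_sum]
  simp only [add_sq, sum_add_distrib, hswap, hdeg, hquad, mul_assoc, ← mul_sum]
  ring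

end SimpleGraph

theorem stmt18_general {V : Type*} [Fintype V] [DecidableEq V] (hV : Nonempty V)
    (G : SimpleGraph V) [DecidableRel G.Adj] (d m t : ℕ) (ht : 1 ≤ t)
    (hreg : G.IsRegularOfDegree d)
    (hm : ∀ v : V, 2 * m ≤ (Finset.univ.filter fun p : V × V =>
      G.Adj v p.1 ∧ G.Adj v p.2 ∧ G.Adj p.1 p.2).card)
    (ht' : ∀ u v : V, G.Adj u v →
      (G.neighborFinset u ∩ G.neighborFinset v).card ≤ t) :
    minEig hV (adjHerm G) ≥ -(d : ℝ) + (m : ℝ) / t := by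
  refine le_inf' _ _ fun i _ => ?_
  set x : V → ℝ := ⇑((adjHerm G).eigenvectorBasis i)
  have heig : (adjHerm G).eigenvalues i = x ⬝ᵥ (G.adjMatrix ℝ *ᵥ x) := by
    simpa using (adjHerm G).eigenvalues_eq i
  have hunit : ∑ v, x v ^ 2 = 1 := by
    rw [← EuclideanSpace.real_norm_sq_eq, (adjHerm G).eigenvectorBasis.orthonormal.1 i, one_pow]
  have key := G.two_mul_mul_sum_sq_le_mul_sum_neighborFinset_add_sq hm ht' x
  rw [hreg.sum_neighborFinset_add_sq, hunit, ← heig] at key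
  have htpos : (0 : ℝ) < t := by exact_mod_cast ht
  rw [neg_add_le_iff_le_add, div_le_iff₀ htpos]
  linarith

/-- If `G` is a connected `d`-regular graph in which every vertex lies in at least `m`
triangles (counted here via ordered pairs: each triangle at `v` gives two ordered pairs
of neighbours) and every edge lies in at most `t ≥ 1` triangles (i.e. adjacent vertices
have at most `t` common neighbours), then the smallest adjacency eigenvalue of `G` is
at least `-d + m/t`. -/
theorem stmt18 {V : Type*} [Fintype V] [DecidableEq V] (hV : Nonempty V)
    (G : SimpleGraph V) [DecidableRel G.Adj] (d m t : ℕ) (ht : 1 ≤ t)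
    (hconn : G.Connected) (hreg : G.IsRegularOfDegree d)
    (hm : ∀ v : V, 2 * m ≤ (Finset.univ.filter fun p : V × V =>
      G.Adj v p.1 ∧ G.Adj v p.2 ∧ G.Adj p.1 p.2).card)
    (ht' : ∀ u v : V, G.Adj u v →
      (G.neighborFinset u ∩ G.neighborFinset v).card ≤ t) :
    minEig hV (adjHerm G) ≥ -(d : ℝ) + (m : ℝ) / t :=
  stmt18_general hV G d m t ht hreg hm ht'
end

section
/- Let G be a connected 3-regular claw-free simple graph on n ≥ 6 vertices. Then the smallest adjacency eigenvalue of G is at least θ, where θ ≈ -2.272 is the smallest real root of x^3 - x + 14 = 0 (equivalently, every eigenvalue λ of G satisfies λ^3 - λ + 14 ≥ 0). -/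
open Finset

/-- From a 3-element finset containing two distinct given elements, extract the third
and compute the sum. -/
lemma sum3 {V : Type*} [DecidableEq V] (f : V → ℝ) (s : Finset V) (h3 : s.card = 3)
    (v b : V) (hv : v ∈ s) (hb : b ∈ s) (hvb : v ≠ b) :
    ∃ p, ∑ u ∈ s, f u = f v + f b + f p := by
  have hsub : ({v, b} : Finset V) ⊆ s := by
    simp [Finset.insert_subset_iff, hv, hb]
  have hcard2 : ({v, b} : Finset V).card = 2 := by
    rw [Finset.card_insert_of_notMem (by simp [hvb]), Finset.card_singleton]
  have h1 : (s \ {v, b}).card = 1 := by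
    rw [Finset.card_sdiff_of_subset hsub, h3, hcard2]
  obtain ⟨p, hp⟩ := Finset.card_eq_one.mp h1
  have hpmem : p ∈ s \ ({v, b} : Finset V) := by rw [hp]; simp
  have hpv : p ≠ v := by
    intro h; subst h; simp at hpmem
  have hpb : p ≠ b := by
    intro h; subst h; simp at hpmem
  have hs : s = insert v (insert b {p}) := by
    rw [← Finset.union_sdiff_of_subset hsub, hp]
    ext u; simp [or_assoc]
  refine ⟨p, ?_⟩
  rw [hs, Finset.sum_insert (by simp [hvb, Ne.symm hpv]),
    Finset.sum_insert (by simp [Ne.symm hpb]), Finset.sum_singleton]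
  ring

/-- Key local argument: if a normalized eigenvector attains value 1 at `v` (the maximum
in absolute value), and `v` has two adjacent neighbours `a, b` (a triangle), then a
negative eigenvalue `μ` satisfies `μ² ≤ 5`. -/
lemma core_claw {V : Type*} [Fintype V] [DecidableEq V] (G : SimpleGraph V)
    [DecidableRel G.Adj]
    (hreg : G.IsRegularOfDegree 3) (μ : ℝ) (z : V → ℝ)
    (hz : ∀ u, ∑ w ∈ G.neighborFinset u, z w = μ * z u)
    (v a b c : V) (hva : G.Adj v a) (hvb : G.Adj v b) (hab : G.Adj a b)
    (he : μ = z a + z b + z c) (hbound : ∀ u, |z u| ≤ 1) (hzv : z v = 1)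
    (hμ : μ < 0) : μ ^ 2 ≤ 5 := by
  have hcarda : (G.neighborFinset a).card = 3 := by
    rw [G.card_neighborFinset_eq_degree]; exact hreg a
  have hcardb : (G.neighborFinset b).card = 3 := by
    rw [G.card_neighborFinset_eq_degree]; exact hreg b
  obtain ⟨p, hp⟩ := sum3 z _ hcarda v b
    ((G.mem_neighborFinset a v).mpr hva.symm)
    ((G.mem_neighborFinset a b).mpr hab) hvb.ne
  obtain ⟨q, hq⟩ := sum3 z _ hcardb v a
    ((G.mem_neighborFinset b v).mpr hvb.symm)
    ((G.mem_neighborFinset b a).mpr hab.symm) hva.ne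
  have ea : μ * z a = 1 + z b + z p := by
    rw [← hz a, hp, hzv]
  have eb : μ * z b = 1 + z a + z q := by
    rw [← hz b, hq, hzv]
  have hc := abs_le.mp (hbound c)
  have hpp := abs_le.mp (hbound p)
  have hqq := abs_le.mp (hbound q)
  have key : (0:ℝ) ≤ (1 - μ) * (μ + 1 - (z a + z b)) :=
    mul_nonneg (by linarith) (by linarith [hc.1])
  nlinarith [key, ea, eb, hpp.1, hpp.2, hqq.1, hqq.2]

/-- Every adjacency eigenvalue `μ` of a connected `3`-regular claw-free simple graph on
`n ≥ 6` vertices satisfies `μ³ - μ + 14 ≥ 0`; equivalently, the smallest adjacency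
eigenvalue is at least the smallest real root `θ ≈ -2.272` of `x³ - x + 14 = 0`. -/
theorem stmt19 {V : Type*} [Fintype V] [DecidableEq V]
    (G : SimpleGraph V) [DecidableRel G.Adj]
    (hconn : G.Connected) (hreg : G.IsRegularOfDegree 3) (hn : 6 ≤ Fintype.card V)
    (hclawfree : ∀ v a b c : V, a ≠ b → a ≠ c → b ≠ c →
      G.Adj v a → G.Adj v b → G.Adj v c → (G.Adj a b ∨ G.Adj a c ∨ G.Adj b c)) :
    ∀ (μ : ℝ) (x : V → ℝ), x ≠ 0 → (G.adjMatrix ℝ).mulVec x = μ • x →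
      μ ^ 3 - μ + 14 ≥ 0 := by
  intro μ x hx0 heig
  have hne : Nonempty V := Fintype.card_pos_iff.mp (by omega)
  obtain ⟨v, -, hv⟩ := Finset.exists_max_image Finset.univ (fun u => |x u|)
    ⟨Classical.arbitrary V, Finset.mem_univ _⟩
  have hxv : x v ≠ 0 := by
    intro h
    apply hx0
    funext u
    have hu := hv u (Finset.mem_univ u)
    simp only [h, abs_zero] at hu
    exact abs_nonpos_iff.mp hu
  -- eigen-equation pointwise
  have h1 : ∀ u, ∑ w ∈ G.neighborFinset u, x w = μ * x u := by
    intro u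
    have := congrFun heig u
    rwa [SimpleGraph.adjMatrix_mulVec_apply, Pi.smul_apply, smul_eq_mul] at this
  -- normalize
  set z : V → ℝ := fun u => x u / x v with hzdef
  have hz : ∀ u, ∑ w ∈ G.neighborFinset u, z w = μ * z u := by
    intro u
    simp only [hzdef]
    rw [← Finset.sum_div, h1 u]
    ring
  have hzv : z v = 1 := div_self hxv
  have hbound : ∀ u, |z u| ≤ 1 := by
    intro u
    simp only [hzdef, abs_div]
    exact (div_le_one (abs_pos.mpr hxv)).mpr (hv u (Finset.mem_univ u))
  rcases le_or_gt 0 μ with h | h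
  · nlinarith [mul_nonneg h (sq_nonneg (μ - 1)), sq_nonneg (μ - 1)]
  · have hcard : (G.neighborFinset v).card = 3 := by
      rw [G.card_neighborFinset_eq_degree]; exact hreg v
    obtain ⟨a, b, c, hab, hac, hbc, hN⟩ := Finset.card_eq_three.mp hcard
    have hva : G.Adj v a := (G.mem_neighborFinset v a).mp (by rw [hN]; simp)
    have hvb : G.Adj v b := (G.mem_neighborFinset v b).mp (by rw [hN]; simp)
    have hvc : G.Adj v c := (G.mem_neighborFinset v c).mp (by rw [hN]; simp)
    have hsum : μ = z a + z b + z c := by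
      have h2 := hz v
      rw [hN, hzv, mul_one] at h2
      rw [← h2, Finset.sum_insert (by simp [hab, hac]),
        Finset.sum_insert (by simp [hbc]), Finset.sum_singleton]
      ring
    have hsq : μ ^ 2 ≤ 5 := by
      rcases hclawfree v a b c hab hac hbc hva hvb hvc with h3 | h3 | h3
      · exact core_claw G hreg μ z hz v a b c hva hvb h3 hsum hbound hzv h
      · exact core_claw G hreg μ z hz v a c b hva hvc h3 (by linarith) hbound hzv h
      · exact core_claw G hreg μ z hz v b c a hvb hvc h3 (by linarith) hbound hzv h
    nlinarith [mul_nonneg (by linarith : (0:ℝ) ≤ -μ) (by linarith : (0:ℝ) ≤ 5 - μ ^ 2),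
      sq_nonneg (μ + 3)]
end
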